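/- Let G be a finite group and S_1,...,S_l irreducible representations. If the tuples (χ^{S_1}_C, ..., χ^{S_l}_C) are pairwise distinct as C ranges over the conjugacy classes of G, then the basis elements a_{S_1},...,a_{S_l} multiplicatively generate the fusion algebra R(G). -/

import Mathlib

open scoped Classical
open CategoryTheory

/-- The value `χ^W_C` of the character of `W` on (any element of) the conjugacy class `C`. -/
noncomputable def chiC {G : Type} [Group G] [Fintype G] (W : FDRep ℂ G) (C : ConjClasses G) : ℂ :=
  W.character (Quotient.out C)

/-- The fusion coefficient `N_{RS}^T = (1/|G|) ∑_g χ^R(g) χ^S(g) χ^T(g⁻¹)`. -/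
noncomputable def fusionN {G : Type} [Group G] [Fintype G] (R S T : FDRep ℂ G) : ℂ :=
  (Fintype.card G : ℂ)⁻¹ * ∑ g : G, R.character g * S.character g * T.character g⁻¹

/-- The multiplication of the fusion algebra `R(G)`, in coordinates with respect to the
basis `{a_R : R ∈ Irr(G)}` (indexed by `ι` via the family `V`). -/
noncomputable def fusionMul {G : Type} [Group G] [Fintype G] {ι : Type*} [Fintype ι]
    (V : ι → FDRep ℂ G) (x y : ι → ℂ) : ι → ℂ :=
  fun T => ∑ R, ∑ S, x R * y S * fusionN (V R) (V S) (V T)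

/-- The basis vector `a_R` of the fusion algebra, in coordinates. -/
noncomputable def fusBasis {ι : Type*} [DecidableEq ι] (R : ι) : ι → ℂ :=
  fun T => if T = R then 1 else 0

/-!
Sending `a_R` to its row `(χ^R_C)_C` of the character table is the coordinate map of `R(G)` in
the basis of idempotents `A_C`, so it is an injective algebra map `R(G) → ℂ^{Cl(G)}`: injective
by the orthogonality of irreducible characters, multiplicative because
`χ^R χ^S = ∑_T N_{RS}^T χ^T`, which is the expansion of the character of `R ⊗ S` given by
complete reducibility. It sends a monomial in the `a_{S_j}` to the pointwise product of the
rows `χ^{S_j}`. These rows separate the conjugacy classes, so products of them span all of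
`ℂ^{Cl(G)}`: the span contains the indicator of each class `C`, namely
`∏_{D ≠ C} (χ^{S_{j_D}} - χ^{S_{j_D}}_D) / (χ^{S_{j_D}}_C - χ^{S_{j_D}}_D)`
for any `j_D` with `χ^{S_{j_D}}_C ≠ χ^{S_{j_D}}_D`.
-/

section SeparatingFunctions

variable {X ι K : Type*} [Finite X] [Field K]

theorem adjoin_range_eq_top_of_separatesPoints (F : ι → X → K)
    (hF : Function.Injective fun x j => F j x) :
    Algebra.adjoin K (Set.range F) = ⊤ := by
  have : Fintype X := Fintype.ofFinite X
  set A := Algebra.adjoin K (Set.range F)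
  have hsep : ∀ x y : X, x ≠ y → ∃ j, F j x ≠ F j y := fun x y hxy => by
    by_contra! h
    exact hxy (hF (funext h))
  choose j hj using hsep
  have hF_mem : ∀ i, F i ∈ A := fun i => Algebra.subset_adjoin ⟨i, rfl⟩
  have hdelta : ∀ x, (fun z => if x = z then (1 : K) else 0) ∈ A := by
    intro x
    let factor : {y // y ≠ x} → X → K := fun y =>
      (F (j x y y.2.symm) - algebraMap K _ (F (j x y y.2.symm) y)) *
        algebraMap K _ (F (j x y y.2.symm) x - F (j x y y.2.symm) y)⁻¹
    have hfactor : (fun z => if x = z then (1 : K) else 0) = ∏ y, factor y := by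
      funext z
      rw [Finset.prod_apply]
      by_cases hxz : x = z
      · subst hxz
        simp only [if_true]
        refine (Finset.prod_eq_one fun y _ => ?_).symm
        exact mul_inv_cancel₀ (sub_ne_zero.2 (hj x y y.2.symm))
      · rw [if_neg hxz]
        refine (Finset.prod_eq_zero (Finset.mem_univ ⟨z, Ne.symm hxz⟩) ?_).symm
        simp [factor]
    rw [hfactor]
    exact Subalgebra.prod_mem _ fun y _ => A.mul_mem (A.sub_mem (hF_mem _) (A.algebraMap_mem _))
      (A.algebraMap_mem _)
  refine eq_top_iff.2 fun f _ => ?_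
  rw [pi_eq_sum_univ f]
  exact A.sum_mem fun x _ => A.smul_mem (hdelta x) _

theorem span_listProd_eq_top_of_separatesPoints (F : ι → X → K)
    (hF : Function.Injective fun x j => F j x) :
    Submodule.span K {f | ∃ L : List ι, f = (L.map F).prod} = ⊤ := by
  have h := Algebra.toSubmodule_eq_top.2 (adjoin_range_eq_top_of_separatesPoints F hF)
  rw [Algebra.adjoin_eq_span] at h
  refine eq_top_iff.2 (h ▸ Submodule.span_mono fun f hf => ?_)
  induction hf using Submonoid.closure_induction with
  | mem f hf =>
    obtain ⟨j, rfl⟩ := hf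
    exact ⟨[j], by simp⟩
  | one => exact ⟨[], by simp⟩
  | mul f g _ _ hf hg =>
    obtain ⟨L, rfl⟩ := hf
    obtain ⟨L', rfl⟩ := hg
    exact ⟨L ++ L', by simp⟩

end SeparatingFunctions

section LinearAlgebra

section Semiring

variable {K E ι : Type*} [CommSemiring K] [AddCommMonoid E] [Module K E]

theorem apply_sum_smul_of_biorthogonal [Fintype ι] {e : ι → E} {φ : ι → E →ₗ[K] K}
    (he : ∀ i j, φ j (e i) = if i = j then 1 else 0) (c : ι → K) (j : ι) :
    φ j (∑ i, c i • e i) = c j := by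
  simp [he]

theorem eq_sum_of_mem_span_of_biorthogonal [Fintype ι] {e : ι → E} {φ : ι → E →ₗ[K] K}
    (he : ∀ i j, φ j (e i) = if i = j then 1 else 0) {v : E}
    (hv : v ∈ Submodule.span K (Set.range e)) :
    v = ∑ i, φ i v • e i := by
  obtain ⟨c, rfl⟩ := (Submodule.mem_span_range_iff_exists_fun K).1 hv
  simp only [apply_sum_smul_of_biorthogonal he]

theorem Submodule.span_eq_top_of_span_image_eq_top {F : Type*} [AddCommMonoid F] [Module K F]
    {f : E →ₗ[K] F} (hf : Function.Injective f) {s : Set E}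
    (hs : Submodule.span K (f '' s) = ⊤) : Submodule.span K s = ⊤ := by
  have hrange : LinearMap.range f = ⊤ :=
    eq_top_iff.2 (hs ▸ Submodule.span_image f ▸ LinearMap.map_le_range)
  apply Submodule.map_injective_of_injective hf
  rw [Submodule.map_span, hs, Submodule.map_top, hrange]

end Semiring

theorem LinearMap.trace_eq_trace_restrict_add_of_isCompl {K E : Type*} [Field K] [AddCommGroup E]
    [Module K E] [FiniteDimensional K E]
    {p q : Submodule K E} (hpq : IsCompl p q) (f : E →ₗ[K] E) (hp : ∀ x ∈ p, f x ∈ p)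
    (hq : ∀ x ∈ q, f x ∈ q) :
    LinearMap.trace K E f =
      LinearMap.trace K p (f.restrict hp) + LinearMap.trace K q (f.restrict hq) := by
  let N : Bool → Submodule K E := fun b => bif b then p else q
  have hN : DirectSum.IsInternal N :=
    (DirectSum.isInternal_submodule_iff_isCompl N (i := true) (j := false) Bool.noConfusion
      (by ext b; cases b <;> simp)).2 hpq
  rw [LinearMap.trace_eq_sum_trace_restrict hN (f := f) (fun b => by cases b; exacts [hq, hp]),
    Fintype.sum_bool]
  rfl

end LinearAlgebra

section Subrepresentation

variable {k G M : Type*} [Field k] [Monoid G] [AddCommGroup M] [Module k M]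
  [FiniteDimensional k M] {ρ : Representation k G M}

theorem Subrepresentation.finrank_lt_of_ne_top {σ : Subrepresentation ρ} (h : σ ≠ ⊤) :
    Module.finrank k σ.toSubmodule < Module.finrank k M :=
  Submodule.finrank_lt fun h' => h (Subrepresentation.toSubmodule_injective h')

theorem Representation.character_eq_add_of_isCompl {σ τ : Subrepresentation ρ}
    (h : IsCompl σ τ) :
    ρ.character = σ.toRepresentation.character + τ.toRepresentation.character := by
  have h' : IsCompl σ.toSubmodule τ.toSubmodule :=
    ⟨disjoint_iff.2 (congrArg Subrepresentation.toSubmodule h.inf_eq_bot),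
      codisjoint_iff.2 (congrArg Subrepresentation.toSubmodule h.sup_eq_top)⟩
  funext g
  exact LinearMap.trace_eq_trace_restrict_add_of_isCompl h' (ρ g)
    (σ.apply_mem_toSubmodule g) (τ.apply_mem_toSubmodule g)

end Subrepresentation

section CharacterPairing

variable {k G : Type*} [Field k] [Group G] [Fintype G]

noncomputable def charPairing (W : FDRep k G) : (G → k) →ₗ[k] k where
  toFun f := (Nat.card G : k)⁻¹ * ∑ g, f g * W.character g⁻¹
  map_add' f f' := by simp only [Pi.add_apply, add_mul, Finset.sum_add_distrib, mul_add]
  map_smul' c f := by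
    simp only [Pi.smul_apply, smul_eq_mul, mul_assoc, ← Finset.mul_sum, RingHom.id_apply]
    ring

theorem charPairing_apply (W : FDRep k G) (f : G → k) :
    charPairing W f = (Nat.card G : k)⁻¹ * ∑ g, f g * W.character g⁻¹ :=
  rfl

end CharacterPairing

section Characters

universe u

variable {k G : Type u} [Field k] [IsAlgClosed k] [CharZero k] [Group G] [Fintype G]

theorem Representation.simple_of_isIrreducible {M : Type u} [AddCommGroup M] [Module k M]
    [FiniteDimensional k M] (ρ : Representation k G M) [ρ.IsIrreducible] :
    Simple (FDRep.of ρ) := by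
  have hcard : (Nat.card G : k) ≠ 0 := Nat.cast_ne_zero.2 Nat.card_pos.ne'
  let := invertibleOfNonzero hcard
  have h := Representation.char_orthonormal ρ ρ
  rw [if_pos ⟨Representation.Equiv.refl ρ⟩, inv_mul_eq_one₀ hcard] at h
  exact (FDRep.simple_iff_char_is_norm_one _).2 h.symm

theorem Representation.character_mem_span_of_complete {ι : Type*} {V : ι → FDRep k G}
    (hcomplete : ∀ W : FDRep k G, Simple W → ∃ i, Nonempty (W ≅ V i))
    {M : Type u} [AddCommGroup M] [Module k M] [FiniteDimensional k M]
    (ρ : Representation k G M) :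
    ρ.character ∈ Submodule.span k (Set.range fun i => (V i).character) := by
  induction hn : Module.finrank k M using Nat.strong_induction_on generalizing M with
  | _ n ih =>
  rcases subsingleton_or_nontrivial M with hM | hM
  · have : ρ.character = 0 := funext fun g => by
      simp [Representation.character, Subsingleton.elim (ρ g) 0]
    rw [this]
    exact Submodule.zero_mem _
  by_cases hreducible : ∃ σ : Subrepresentation ρ, σ ≠ ⊥ ∧ σ ≠ ⊤
  · obtain ⟨σ, hbot, htop⟩ := hreducible
    -- Maschke's theorem
    have : ComplementedLattice (Subrepresentation ρ) :=
      (Representation.isSemisimpleRepresentation_iff_isSemisimpleModule_asModule ρ).2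
        inferInstance
    obtain ⟨τ, hτ⟩ := exists_isCompl σ
    have htop' : τ ≠ ⊤ := fun h => hbot (eq_bot_of_isCompl_top (h ▸ hτ))
    rw [Representation.character_eq_add_of_isCompl hτ]
    exact add_mem (ih _ (hn ▸ Subrepresentation.finrank_lt_of_ne_top htop) _ rfl)
      (ih _ (hn ▸ Subrepresentation.finrank_lt_of_ne_top htop') _ rfl)
  · have : ρ.IsIrreducible := by
      refine (isSimpleOrder_iff _).2 ⟨⟨⊥, ⊤, fun h => ?_⟩, fun σ => ?_⟩
      · exact bot_ne_top (congrArg Subrepresentation.toSubmodule h : (⊥ : Submodule k M) = ⊤)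
      · exact or_iff_not_imp_left.2 fun hbot => not_not.1 fun htop =>
          hreducible ⟨σ, hbot, htop⟩
    obtain ⟨i, ⟨e⟩⟩ := hcomplete _ (Representation.simple_of_isIrreducible ρ)
    rw [show ρ.character = (V i).character from FDRep.char_iso e]
    exact Submodule.subset_span ⟨i, rfl⟩

theorem charPairing_character {ι : Type*} {V : ι → FDRep k G} (hsimple : ∀ i, Simple (V i))
    (hdistinct : ∀ i j, i ≠ j → IsEmpty (V i ≅ V j)) (i j : ι) :
    charPairing (V j) (V i).character = if i = j then 1 else 0 := by
  let := invertibleOfNonzero (Nat.cast_ne_zero.2 Nat.card_pos.ne' : (Nat.card G : k) ≠ 0)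
  rw [charPairing_apply, FDRep.char_orthonormal (V i) (V j)]
  by_cases hij : i = j
  · subst hij
    simp [Nonempty.intro (Iso.refl (V i))]
  · simp [hij, not_nonempty_iff.2 (hdistinct i j hij)]

end Characters

section FusionAlgebra

open scoped MonoidalCategory

variable {G : Type} [Group G] [Fintype G]

theorem fusionN_eq_charPairing (R S T : FDRep ℂ G) :
    fusionN R S T = charPairing T (R.character * S.character) := by
  rw [charPairing_apply, fusionN, Nat.card_eq_fintype_card]
  rfl

theorem chiC_mk (W : FDRep ℂ G) (g : G) : chiC W (ConjClasses.mk g) = W.character g := by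
  obtain ⟨c, hc⟩ :=
    isConj_iff.1 (ConjClasses.mk_eq_mk_iff_isConj.1 (Quotient.out_eq (ConjClasses.mk g)))
  rw [chiC, ← FDRep.char_conj W _ c, hc]

variable {ι : Type*} [Fintype ι] {V : ι → FDRep ℂ G}

theorem character_mul_eq_sum_fusionN (hsimple : ∀ i, Simple (V i))
    (hdistinct : ∀ i j, i ≠ j → IsEmpty (V i ≅ V j))
    (hcomplete : ∀ W : FDRep ℂ G, Simple W → ∃ i, Nonempty (W ≅ V i)) (R S : ι) :
    (V R).character * (V S).character = ∑ T, fusionN (V R) (V S) (V T) • (V T).character := by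
  have hmem : (V R ⊗ V S).character ∈ _ :=
    Representation.character_mem_span_of_complete hcomplete (V R ⊗ V S).ρ
  rw [FDRep.char_tensor] at hmem
  simp only [fusionN_eq_charPairing]
  exact eq_sum_of_mem_span_of_biorthogonal (charPairing_character hsimple hdistinct) hmem

variable (V)

noncomputable def classEval : (ι → ℂ) →ₗ[ℂ] ConjClasses G → ℂ :=
  Fintype.linearCombination ℂ fun R => chiC (V R)

theorem classEval_apply (x : ι → ℂ) (C : ConjClasses G) :
    classEval V x C = ∑ R, x R * chiC (V R) C := by
  simp [classEval, Fintype.linearCombination_apply]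

theorem classEval_fusBasis (R : ι) : classEval V (fusBasis R) = chiC (V R) := by
  have : fusBasis R = Pi.single R 1 := funext fun T => by simp [fusBasis, Pi.single_apply]
  rw [this, classEval, Fintype.linearCombination_apply_single, one_smul]

theorem classEval_fusionMul (hsimple : ∀ i, Simple (V i))
    (hdistinct : ∀ i j, i ≠ j → IsEmpty (V i ≅ V j))
    (hcomplete : ∀ W : FDRep ℂ G, Simple W → ∃ i, Nonempty (W ≅ V i)) (x y : ι → ℂ) :
    classEval V (fusionMul V x y) = classEval V x * classEval V y := by
  funext C
  have hprod R S : chiC (V R) C * chiC (V S) C =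
      ∑ T, fusionN (V R) (V S) (V T) * chiC (V T) C := by
    simpa [chiC] using
      congrFun (character_mul_eq_sum_fusionN hsimple hdistinct hcomplete R S) C.out
  calc classEval V (fusionMul V x y) C
      = ∑ T, (∑ R, ∑ S, x R * y S * fusionN (V R) (V S) (V T)) * chiC (V T) C :=
        classEval_apply V _ C
    _ = ∑ R, ∑ S, x R * y S * ∑ T, fusionN (V R) (V S) (V T) * chiC (V T) C := by
        simp only [Finset.sum_mul, Finset.mul_sum, mul_assoc]
        rw [Finset.sum_comm]
        exact Finset.sum_congr rfl fun R _ => Finset.sum_comm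
    _ = ∑ R, ∑ S, x R * chiC (V R) C * (y S * chiC (V S) C) := by
        simp only [← hprod]
        exact Finset.sum_congr rfl fun R _ => Finset.sum_congr rfl fun S _ => by ring
    _ = classEval V x C * classEval V y C := by
        rw [classEval_apply, classEval_apply, Finset.sum_mul_sum]

theorem classEval_injective (hsimple : ∀ i, Simple (V i))
    (hdistinct : ∀ i j, i ≠ j → IsEmpty (V i ≅ V j)) :
    Function.Injective (classEval V) := by
  refine (injective_iff_map_eq_zero _).2 fun x hx => funext fun j => ?_
  have hsum : ∑ R, x R • (V R).character = 0 := funext fun g => by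
    simpa [classEval_apply, chiC_mk] using congrFun hx (ConjClasses.mk g)
  simpa [hsum] using
    (apply_sum_smul_of_biorthogonal (charPairing_character hsimple hdistinct) x j).symm

theorem classEval_foldr_fusionMul (hsimple : ∀ i, Simple (V i))
    (hdistinct : ∀ i j, i ≠ j → IsEmpty (V i ≅ V j))
    (hcomplete : ∀ W : FDRep ℂ G, Simple W → ∃ i, Nonempty (W ≅ V i))
    {i₀ : ι} (htriv : ∀ g : G, (V i₀).character g = 1) (L : List ι) :
    classEval V ((L.map fusBasis).foldr (fusionMul V) (fusBasis i₀)) =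
      (L.map fun R => chiC (V R)).prod := by
  induction L with
  | nil => exact (classEval_fusBasis V i₀).trans (funext fun C => htriv _)
  | cons R L ih =>
    rw [List.map_cons, List.foldr_cons, classEval_fusionMul V hsimple hdistinct hcomplete,
      classEval_fusBasis, ih, List.map_cons, List.prod_cons]

end FusionAlgebra

/-- Let `G` be a finite group and `S 1, …, S l` irreducible representations (chosen from a
complete family `V : ι → FDRep ℂ G` of pairwise non-isomorphic irreducibles, with `i₀` the
index of the trivial representation).  If the tuples `(χ^{S_1}_C, …, χ^{S_l}_C)` are pairwise
distinct as `C` ranges over the conjugacy classes of `G`, then `a_{S_1}, …, a_{S_l}`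
multiplicatively generate the fusion algebra `R(G)`: the monomials in them
(including the empty monomial, the unit `a_{R₀}`) span the whole algebra. -/
theorem fusionBasis_generate_fusion_algebra (G : Type) [Group G] [Fintype G]
    {ι : Type*} [Fintype ι] (V : ι → FDRep ℂ G)
    (hsimple : ∀ i, Simple (V i))
    (hdistinct : ∀ i j, i ≠ j → IsEmpty (V i ≅ V j))
    (hcomplete : ∀ W : FDRep ℂ G, Simple W → ∃ i, Nonempty (W ≅ V i))
    (i₀ : ι) (htriv : ∀ g : G, (V i₀).character g = 1)
    {l : ℕ} (S : Fin l → ι)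
    (hdist : Function.Injective fun C : ConjClasses G => fun j : Fin l => chiC (V (S j)) C) :
    Submodule.span ℂ
      {x : ι → ℂ | ∃ L : List (Fin l),
        x = (L.map fun j => fusBasis (S j)).foldr (fusionMul V) (fusBasis i₀)} = ⊤ := by
  refine Submodule.span_eq_top_of_span_image_eq_top
    (classEval_injective V hsimple hdistinct) (eq_top_iff.2 ?_)
  rw [← span_listProd_eq_top_of_separatesPoints (fun j => chiC (V (S j))) hdist]
  refine Submodule.span_mono ?_
  rintro f ⟨L, rfl⟩
  have hmonomial := classEval_foldr_fusionMul V hsimple hdistinct hcomplete htriv (L.map S)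
  rw [List.map_map, List.map_map] at hmonomial
  exact ⟨_, ⟨L, rfl⟩, hmonomial⟩
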